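/- With ψ(x) = |x−y₂|⁻² − |x−y₁|⁻² − a and ψ(x) = 0, for any unit vector τ with τ·∇ψ(x)=0 the identity ∂²_{ττ}ψ(x) = 2/|x−y₁|⁴ − 2(1/|x−y₁|² + a)² − (8((x−y₁)·τ)²/|x−y₁|⁶)·(a/(1/|x−y₁|² + a)) holds. -/

import Mathlib

/-!
Along the line `t ↦ x + t • τ` with `‖τ‖ = 1`, each squared distance `‖x + t • τ - yᵢ‖ ^ 2` is the
quadratic `cᵢ + 2 sᵢ t + t ^ 2` with `cᵢ = ‖x - yᵢ‖ ^ 2` and `sᵢ = ⟪x - yᵢ, τ⟫`, whose reciprocal has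
second derivative `-2 / cᵢ ^ 2 + 8 sᵢ ^ 2 / cᵢ ^ 3` at `0`. The level-set condition turns `1 / c₂` into
`1 / c₁ + a`, and tangency of `τ` gives `s₂ = s₁ c₂ ^ 2 / c₁ ^ 2`; substituting both is a field identity.
-/

open Filter Topology

section Calculus

variable {𝕜 F : Type*} [NontriviallyNormedField 𝕜] [NormedAddCommGroup F] [NormedSpace 𝕜 F]

theorem hasDerivAt_deriv_sub_sub_const {f g : 𝕜 → F} {x : 𝕜} {f'' g'' a : F}
    (hf : ∀ᶠ t in 𝓝 x, DifferentiableAt 𝕜 f t) (hg : ∀ᶠ t in 𝓝 x, DifferentiableAt 𝕜 g t)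
    (hf' : HasDerivAt (deriv f) f'' x) (hg' : HasDerivAt (deriv g) g'' x) :
    HasDerivAt (deriv fun t => f t - g t - a) (f'' - g'') x := by
  refine (hf'.sub hg').congr_of_eventuallyEq ?_
  filter_upwards [hf, hg] with t hft hgt
  exact ((hft.hasDerivAt.sub hgt.hasDerivAt).sub_const a).deriv

end Calculus

section Quadratic

variable {c s : ℝ}

theorem hasDerivAt_quadratic (c s t : ℝ) :
    HasDerivAt (fun t : ℝ => c + 2 * s * t + t ^ 2) (2 * s + 2 * t) t :=
  ((((hasDerivAt_id t).const_mul (2 * s)).const_add c).add (hasDerivAt_pow 2 t)).congr_deriv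
    (by simp)

theorem eventually_quadratic_ne_zero (hc : c ≠ 0) :
    ∀ᶠ t in 𝓝 (0 : ℝ), c + 2 * s * t + t ^ 2 ≠ 0 :=
  (hasDerivAt_quadratic c s 0).continuousAt.eventually_ne (by simpa using hc)

theorem hasDerivAt_deriv_inv_quadratic (hc : c ≠ 0) :
    HasDerivAt (deriv fun t : ℝ => (c + 2 * s * t + t ^ 2)⁻¹)
      (-2 / c ^ 2 + 8 * s ^ 2 / c ^ 3) 0 := by
  have hfirst : HasDerivAt (fun t : ℝ => -(2 * s + 2 * t) / (c + 2 * s * t + t ^ 2) ^ 2)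
      (-2 / c ^ 2 + 8 * s ^ 2 / c ^ 3) 0 := by
    have hnum : HasDerivAt (fun t : ℝ => -(2 * s + 2 * t)) (-2) 0 :=
      ((((hasDerivAt_id (0 : ℝ)).const_mul 2).const_add (2 * s)).neg).congr_deriv (by simp)
    refine (hnum.fun_div ((hasDerivAt_quadratic c s 0).pow 2) (by simpa using hc)).congr_deriv ?_
    norm_num [Pi.pow_apply]
    field_simp
    ring
  refine hfirst.congr_of_eventuallyEq ?_
  filter_upwards [eventually_quadratic_ne_zero hc] with t ht
  exact ((hasDerivAt_quadratic c s t).inv ht).deriv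

end Quadratic

section Line

variable {E : Type*} [NormedAddCommGroup E] [InnerProductSpace ℝ E] {x y τ : E}

theorem norm_add_smul_sub_sq (hτ : ‖τ‖ = 1) (t : ℝ) :
    ‖x + t • τ - y‖ ^ 2 = ‖x - y‖ ^ 2 + 2 * inner ℝ (x - y) τ * t + t ^ 2 := by
  rw [add_sub_right_comm, norm_add_sq_real, real_inner_smul_right, norm_smul, hτ,
    Real.norm_eq_abs, mul_one, sq_abs]
  ring

theorem eventually_differentiableAt_inv_norm_add_smul_sub_sq (hxy : x ≠ y) (hτ : ‖τ‖ = 1) :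
    ∀ᶠ t in 𝓝 (0 : ℝ), DifferentiableAt ℝ (fun t : ℝ => (‖x + t • τ - y‖ ^ 2)⁻¹) t := by
  have hc : ‖x - y‖ ^ 2 ≠ 0 := by simpa [sub_eq_zero] using hxy
  filter_upwards [eventually_quadratic_ne_zero (s := inner ℝ (x - y) τ) hc] with t ht
  simp_rw [norm_add_smul_sub_sq hτ]
  exact ((hasDerivAt_quadratic _ _ t).inv ht).differentiableAt

theorem hasDerivAt_deriv_inv_norm_add_smul_sub_sq (hxy : x ≠ y) (hτ : ‖τ‖ = 1) :
    HasDerivAt (deriv fun t : ℝ => (‖x + t • τ - y‖ ^ 2)⁻¹)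
      (-2 / ‖x - y‖ ^ 4 + 8 * inner ℝ (x - y) τ ^ 2 / ‖x - y‖ ^ 6) 0 := by
  have hc : ‖x - y‖ ^ 2 ≠ 0 := by simpa [sub_eq_zero] using hxy
  simp_rw [norm_add_smul_sub_sq hτ]
  convert hasDerivAt_deriv_inv_quadratic (s := inner ℝ (x - y) τ) hc using 3 <;> ring

end Line

theorem tangential_hessian_eq_of_level_of_orthogonal {r₁ r₂ s₁ s₂ a : ℝ}
    (hr₁ : r₁ ≠ 0) (hr₂ : r₂ ≠ 0) (hlevel : (r₂ ^ 2)⁻¹ = (r₁ ^ 2)⁻¹ + a)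
    (horth : s₁ / r₁ ^ 4 = s₂ / r₂ ^ 4) :
    (-2 / r₂ ^ 4 + 8 * s₂ ^ 2 / r₂ ^ 6) - (-2 / r₁ ^ 4 + 8 * s₁ ^ 2 / r₁ ^ 6) =
      2 / r₁ ^ 4 - 2 * ((r₁ ^ 2)⁻¹ + a) ^ 2 - 8 * s₁ ^ 2 / r₁ ^ 6 * (a / ((r₁ ^ 2)⁻¹ + a)) := by
  have hs₂ : s₂ = s₁ * r₂ ^ 4 / r₁ ^ 4 := by
    field_simp at horth ⊢
    linarith
  rw [← hlevel, hs₂, eq_sub_of_add_eq' hlevel.symm]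
  field_simp
  ring

theorem sublevel_tangential_hessian_identity_general {d : ℕ}
    (y₁ y₂ x τ : EuclideanSpace ℝ (Fin d)) (a : ℝ)
    (hx1 : x ≠ y₁) (hx2 : x ≠ y₂)
    (hψ0 : (‖x - y₂‖ ^ 2)⁻¹ = (‖x - y₁‖ ^ 2)⁻¹ + a)
    (hτ : ‖τ‖ = 1)
    (horth : (inner ℝ τ ((2 / ‖x - y₁‖ ^ 4) • (x - y₁) - (2 / ‖x - y₂‖ ^ 4) • (x - y₂)) : ℝ) = 0) :
    deriv (deriv (fun t : ℝ =>
      (‖x + t • τ - y₂‖ ^ 2)⁻¹ - (‖x + t • τ - y₁‖ ^ 2)⁻¹ - a)) 0 =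
      2 / ‖x - y₁‖ ^ 4 - 2 * ((‖x - y₁‖ ^ 2)⁻¹ + a) ^ 2 -
        (8 * (inner ℝ (x - y₁) τ : ℝ) ^ 2 / ‖x - y₁‖ ^ 6) *
          (a / ((‖x - y₁‖ ^ 2)⁻¹ + a)) := by
  rw [(hasDerivAt_deriv_sub_sub_const
    (eventually_differentiableAt_inv_norm_add_smul_sub_sq hx2 hτ)
    (eventually_differentiableAt_inv_norm_add_smul_sub_sq hx1 hτ)
    (hasDerivAt_deriv_inv_norm_add_smul_sub_sq hx2 hτ)
    (hasDerivAt_deriv_inv_norm_add_smul_sub_sq hx1 hτ)).deriv]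
  refine tangential_hessian_eq_of_level_of_orthogonal (by simpa [sub_eq_zero] using hx1)
    (by simpa [sub_eq_zero] using hx2) hψ0 ?_
  rw [inner_sub_right, real_inner_smul_right, real_inner_smul_right, real_inner_comm (x - y₁),
    real_inner_comm (x - y₂)] at horth
  linear_combination horth / 2

/-- The explicit identity for the tangential second derivative of
ψ(x) = |x−y₂|⁻² − |x−y₁|⁻² − a on its zero level set. -/
theorem sublevel_tangential_hessian_identity {d : ℕ}
    (y₁ y₂ x τ : EuclideanSpace ℝ (Fin d)) (a : ℝ)
    (hy : y₁ ≠ y₂) (hx1 : x ≠ y₁) (hx2 : x ≠ y₂)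
    (hψ0 : (‖x - y₂‖ ^ 2)⁻¹ = (‖x - y₁‖ ^ 2)⁻¹ + a)
    (hpos : 0 < (‖x - y₁‖ ^ 2)⁻¹ + a)
    (hτ : ‖τ‖ = 1)
    (horth : (inner ℝ τ ((2 / ‖x - y₁‖ ^ 4) • (x - y₁) - (2 / ‖x - y₂‖ ^ 4) • (x - y₂)) : ℝ) = 0) :
    deriv (deriv (fun t : ℝ =>
      (‖x + t • τ - y₂‖ ^ 2)⁻¹ - (‖x + t • τ - y₁‖ ^ 2)⁻¹ - a)) 0 =
      2 / ‖x - y₁‖ ^ 4 - 2 * ((‖x - y₁‖ ^ 2)⁻¹ + a) ^ 2 -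
        (8 * (inner ℝ (x - y₁) τ : ℝ) ^ 2 / ‖x - y₁‖ ^ 6) *
          (a / ((‖x - y₁‖ ^ 2)⁻¹ + a)) :=
  sublevel_tangential_hessian_identity_general y₁ y₂ x τ a hx1 hx2 hψ0 hτ horth
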